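/- Given a Kripke model on the m-th finite frame (K_m, ≽_m) and a node k not forcing a formula φ, the valuation ν that maps each atom p to the sequence which is the all-1 function at every index n ≠ m and at index m is the characteristic function of forcing p, satisfies ν(φ)_m(k) = 0; in particular ν(φ) is not the designated value (the sequence of all-1 functions). -/

import Mathlib

inductive Fm (α : Type) : Type where
  | top  : Fm α
  | atom : α → Fm α
  | neg  : Fm α → Fm α
  | and  : Fm α → Fm α → Fm α
  | or   : Fm α → Fm α → Fm α
  | imp  : Fm α → Fm α → Fm α

/-- An enumeration (Kₙ, ≽ₙ) of finite Kripke frames: partial orders on finite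
subsets of ℕ. -/
structure FrameSeq : Type where
  K : ℕ → Finset ℕ
  le : ℕ → ℕ → ℕ → Prop
  refl : ∀ n k, k ∈ K n → le n k k
  trans : ∀ n a b c, le n a b → le n b c → le n a c
  antisymm : ∀ n a b, le n a b → le n b a → a = b
  mem_left : ∀ n a b, le n a b → a ∈ K n
  mem_right : ∀ n a b, le n a b → b ∈ K n

/-- Membership in the set 𝒱 of values: sequences of monotone {0,1}-valued functions
on the frames, eventually constantly 1 or eventually constantly 0. -/
def memV (F : FrameSeq) (f : ℕ → ℕ → Bool) : Prop :=
  (∀ n a b, F.le n a b → f n a ≤ f n b) ∧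
  ∃ N : ℕ, (∀ n, N ≤ n → ∀ k, f n k = true) ∨ (∀ n, N ≤ n → ∀ k, f n k = false)

open Classical in
/-- The homomorphic extension of a valuation ν of the atoms to all formulas,
where the connectives act componentwise by the Kripke-style operations on
monotone functions. -/
noncomputable def evalV (F : FrameSeq) (ν : ℕ → ℕ → ℕ → Bool) : Fm ℕ → ℕ → ℕ → Bool
  | .top => fun _ _ => true
  | .atom p => ν p
  | .neg φ => fun n k =>
      if ∀ k', F.le n k k' → evalV F ν φ n k' = false then true else false
  | .and φ ψ => fun n k => evalV F ν φ n k && evalV F ν ψ n k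
  | .or φ ψ => fun n k => evalV F ν φ n k || evalV F ν ψ n k
  | .imp φ ψ => fun n k =>
      if ∀ k', F.le n k k' → evalV F ν φ n k' = true → evalV F ν ψ n k' = true
      then true else false

/-- Kripke forcing on the m-th frame for a Kripke model given by a persistent
atomic valuation `val`. -/
def forceAt (F : FrameSeq) (m : ℕ) (val : ℕ → ℕ → Prop) : ℕ → Fm ℕ → Prop
  | _, .top => True
  | k, .atom p => val k p
  | k, .neg φ => ∀ k', F.le m k k' → ¬ forceAt F m val k' φ
  | k, .and φ ψ => forceAt F m val k φ ∧ forceAt F m val k ψ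
  | k, .or φ ψ => forceAt F m val k φ ∨ forceAt F m val k ψ
  | k, .imp φ ψ => ∀ k', F.le m k k' → forceAt F m val k' φ → forceAt F m val k' ψ

open Classical in
/-- The valuation ν sending each atom p to the sequence which is the all-1
function at every index n ≠ m, and at index m is the characteristic function of
forcing p in the given model. -/
noncomputable def nuOf (F : FrameSeq) (m : ℕ) (val : ℕ → ℕ → Prop) :
    ℕ → ℕ → ℕ → Bool :=
  fun p n k => if n = m then (if val k p then true else false) else true

/-!
At index `m` the valuation `nuOf F m val` is the characteristic function of forcing on the atoms,
and the connectives of `evalV` at a fixed index are exactly the Kripke clauses, so by induction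
`ν(φ)ₘ(k) = 1` iff `k ⊩ φ`. Away from `m` every atom is constantly `1`, which makes each `ν(p)`
eventually `1`; persistency of `val` makes `ν(p)ₘ` monotone.
-/

section Countermodel

variable (F : FrameSeq) (m : ℕ) (val : ℕ → ℕ → Prop)

theorem evalV_nuOf_self (φ : Fm ℕ) (k : ℕ) :
    evalV F (nuOf F m val) φ m k = true ↔ forceAt F m val k φ := by
  induction φ generalizing k with
  | top => simp [evalV, forceAt]
  | atom p => simp [evalV, forceAt, nuOf]
  | neg φ ih => simp [evalV, forceAt, ← ih]
  | and φ ψ ihφ ihψ => simp [evalV, forceAt, ihφ, ihψ]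
  | or φ ψ ihφ ihψ => simp [evalV, forceAt, ihφ, ihψ]
  | imp φ ψ ihφ ihψ => simp [evalV, forceAt, ihφ, ihψ]

theorem memV_nuOf (hpers : ∀ k k' p, F.le m k k' → val k p → val k' p) (p : ℕ) :
    memV F (nuOf F m val p) := by
  refine ⟨fun n a b hab => ?_, m + 1, Or.inl fun n hn k => ?_⟩
  · by_cases hn : n = m
    · subst hn
      by_cases ha : val a p
      · simp [nuOf, ha, hpers a b p hab ha]
      · simp [nuOf, ha]
    · simp [nuOf, hn]
  · simp [nuOf, show n ≠ m by omega]

end Countermodel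

theorem eval_of_countermodel (F : FrameSeq) (m : ℕ) (val : ℕ → ℕ → Prop)
    (hpers : ∀ k k' p, F.le m k k' → val k p → val k' p)
    (k : ℕ) (φ : Fm ℕ) (hkφ : ¬ forceAt F m val k φ) :
    (∀ p, memV F (nuOf F m val p)) ∧
    evalV F (nuOf F m val) φ m k = false ∧
    evalV F (nuOf F m val) φ ≠ (fun _ _ => true) := by
  have hfalse : evalV F (nuOf F m val) φ m k = false := by
    simpa [← evalV_nuOf_self] using hkφ
  refine ⟨memV_nuOf F m val hpers, hfalse, fun htop => ?_⟩
  simp [htop] at hfalse
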